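/- arXiv:1304.6504 — 4 statements merged into one kernel-verified Lean document; each statement's English description precedes it below -/
import Mathlib

section
/- For nonnegative measurable functions σ, σs on an interval with σs ≤ σ pointwise, and for any 0 ≤ t ≤ L, the integral ∫₀ᵗ exp(-∫ₛᵗ σ(r) dr) · σs(s) ds is at most 1 - exp(-∫₀ᵗ σs(r) dr), which is at most 1 - exp(-‖σs‖·L) where ‖σs‖ is an essential upper bound for σs. -/
/-!
With `F s = ∫₀ˢ σs`, the integrand `exp (-(∫ₛᵗ σs)) * σs s = exp (F s - F t) * σs s` is, almost
everywhere, the derivative of `s ↦ exp (F s - F t)` (Lebesgue differentiation). Since `F` is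
absolutely continuous and `exp` is locally Lipschitz, `exp ∘ F` is absolutely continuous, so the
fundamental theorem of calculus gives the identity `∫₀ᵗ exp (-∫ₛᵗ σs) σs = 1 - exp (-∫₀ᵗ σs)`.
Replacing `σs` by the larger `σ` in the exponent only decreases the integrand, and
`∫₀ᵗ σs ≤ M t ≤ M L` gives the second bound.
-/

open MeasureTheory intervalIntegral Real Set

theorem AbsolutelyContinuousOnInterval.lipschitzOnWith_comp {X Y : Type*} [PseudoMetricSpace X]
    [PseudoMetricSpace Y] {f : ℝ → X} {g : X → Y} {K : NNReal} {s : Set X} {a b : ℝ}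
    (hg : LipschitzOnWith K g s) (hf : AbsolutelyContinuousOnInterval f a b)
    (hfs : MapsTo f (uIcc a b) s) : AbsolutelyContinuousOnInterval (g ∘ f) a b := by
  unfold AbsolutelyContinuousOnInterval at hf ⊢
  refine squeeze_zero' (.of_forall fun E ↦ Finset.sum_nonneg fun _ _ ↦ dist_nonneg) ?_
    (by simpa using hf.const_mul (K : ℝ))
  filter_upwards [Filter.mem_inf_of_right (Filter.mem_principal_self _)] with E hE
  rw [Finset.mul_sum]
  exact Finset.sum_le_sum fun i hi ↦
    hg.dist_le_mul _ (hfs (hE.1 i hi).1) _ (hfs (hE.1 i hi).2)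

theorem AbsolutelyContinuousOnInterval.locallyLipschitz_comp {E Y : Type*}
    [SeminormedAddCommGroup E] [PseudoMetricSpace Y] {f : ℝ → E} {g : E → Y} {a b : ℝ}
    (hg : LocallyLipschitz g) (hf : AbsolutelyContinuousOnInterval f a b) :
    AbsolutelyContinuousOnInterval (g ∘ f) a b := by
  have hcpt : IsCompact (f '' uIcc a b) := isCompact_uIcc.image_of_continuousOn hf.continuousOn
  obtain ⟨K, hK⟩ := LocallyLipschitzOn.exists_lipschitzOnWith_of_compact hcpt hg.locallyLipschitzOn
  exact hf.lipschitzOnWith_comp hK (mapsTo_image f _)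

theorem integral_exp_primitive_mul {f : ℝ → ℝ} {a b : ℝ} (hf : IntervalIntegrable f volume a b) :
    ∫ s in a..b, exp (∫ r in a..s, f r) * f s = exp (∫ r in a..b, f r) - 1 := by
  have hF := hf.absolutelyContinuousOnInterval_intervalIntegral (c := a) left_mem_uIcc
  have hexpF := hF.locallyLipschitz_comp (contDiff_exp (n := 1)).locallyLipschitz
  have hFTC := hexpF.integral_deriv_eq_sub
  simp only [Function.comp_apply, integral_same, exp_zero] at hFTC
  rw [← hFTC]
  refine integral_congr_ae ?_
  filter_upwards [hf.ae_hasDerivAt_integral] with x hx hxab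
  exact ((hx (uIoc_subset_uIcc hxab) a left_mem_uIcc).exp.deriv).symm

theorem integral_exp_neg_integral_mul {f : ℝ → ℝ} {a b : ℝ}
    (hf : IntervalIntegrable f volume a b) :
    ∫ s in a..b, exp (-∫ r in s..b, f r) * f s = 1 - exp (-∫ r in a..b, f r) := by
  have hsplit : ∀ s ∈ uIcc a b, ∫ r in s..b, f r = (∫ r in a..b, f r) - ∫ r in a..s, f r :=
    fun s hs ↦ (integral_interval_sub_left hf (hf.mono_set (uIcc_subset_uIcc_left hs))).symm
  calc ∫ s in a..b, exp (-∫ r in s..b, f r) * f s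
      = ∫ s in a..b, exp (-∫ r in a..b, f r) * (exp (∫ r in a..s, f r) * f s) :=
        integral_congr fun s hs ↦ by
          rw [hsplit s hs, neg_sub, sub_eq_add_neg, exp_add]; ring
    _ = exp (-∫ r in a..b, f r) * (exp (∫ r in a..b, f r) - 1) := by
        rw [intervalIntegral.integral_const_mul, integral_exp_primitive_mul hf]
    _ = 1 - exp (-∫ r in a..b, f r) := by
        rw [mul_sub, ← exp_add, neg_add_cancel, exp_zero, mul_one]

theorem intervalIntegrable_exp_neg_integral_mul {f g : ℝ → ℝ} {a b : ℝ}
    (hf : IntervalIntegrable f volume a b) (hg : IntervalIntegrable g volume a b) :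
    IntervalIntegrable (fun s ↦ exp (-∫ r in s..b, g r) * f s) volume a b :=
  hf.continuousOn_mul (continuous_exp.comp_continuousOn
    (continuousOn_primitive_interval_left ((intervalIntegrable_iff' (f := g)).mp hg)).neg)

theorem integral_exp_neg_integral_mul_le {f g : ℝ → ℝ} {a b : ℝ} (hab : a ≤ b)
    (hf : IntervalIntegrable f volume a b) (hg : IntervalIntegrable g volume a b)
    (hf_nonneg : ∀ x ∈ Icc a b, 0 ≤ f x) (hfg : ∀ x ∈ Icc a b, f x ≤ g x) :
    ∫ s in a..b, exp (-∫ r in s..b, g r) * f s ≤ 1 - exp (-∫ r in a..b, f r) := by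
  rw [← integral_exp_neg_integral_mul hf]
  refine integral_mono_on hab (intervalIntegrable_exp_neg_integral_mul hf hg)
    (intervalIntegrable_exp_neg_integral_mul hf hf) fun s hs ↦ ?_
  have hsb : uIcc s b ⊆ uIcc a b := uIcc_subset_uIcc_right (by rwa [uIcc_of_le hab])
  gcongr
  · exact hf_nonneg s hs
  · exact integral_mono_on hs.2 (hf.mono_set hsb) (hg.mono_set hsb)
      fun x hx ↦ hfg x ⟨hs.1.trans hx.1, hx.2⟩

theorem stmt0_general (σ σs : ℝ → ℝ) (L M t : ℝ)
    (hσsmeas : Measurable σs)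
    (hσs_nonneg : ∀ s ∈ Icc 0 L, 0 ≤ σs s)
    (hle : ∀ s ∈ Icc 0 L, σs s ≤ σ s)
    (hM : ∀ s ∈ Icc 0 L, σs s ≤ M)
    (hσint : IntegrableOn σ (Icc 0 L))
    (ht0 : 0 ≤ t) (htL : t ≤ L) :
    (∫ s in (0:ℝ)..t, Real.exp (-(∫ r in s..t, σ r)) * σs s)
        ≤ 1 - Real.exp (-(∫ r in (0:ℝ)..t, σs r)) ∧
    1 - Real.exp (-(∫ r in (0:ℝ)..t, σs r)) ≤ 1 - Real.exp (-(M * L)) := by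
  have hsub : Icc 0 t ⊆ Icc 0 L := Icc_subset_Icc_right htL
  have hσs_int : IntegrableOn σs (Icc 0 L) :=
    hσint.mono' hσsmeas.aestronglyMeasurable.restrict <|
      (ae_restrict_mem measurableSet_Icc).mono fun s hs ↦ by
        rw [norm_of_nonneg (hσs_nonneg s hs)]; exact hle s hs
  have hσs_ii : IntervalIntegrable σs volume 0 t :=
    (intervalIntegrable_iff_integrableOn_Icc_of_le ht0).2 (hσs_int.mono_set hsub)
  have hσ_ii : IntervalIntegrable σ volume 0 t :=
    (intervalIntegrable_iff_integrableOn_Icc_of_le ht0).2 (hσint.mono_set hsub)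
  refine ⟨integral_exp_neg_integral_mul_le ht0 hσs_ii hσ_ii (fun x hx ↦ hσs_nonneg x (hsub hx))
    (fun x hx ↦ hle x (hsub hx)), ?_⟩
  have hM0 : 0 ≤ M := (hσs_nonneg 0 ⟨le_rfl, ht0.trans htL⟩).trans (hM 0 ⟨le_rfl, ht0.trans htL⟩)
  have hbound : ∀ x ∈ uIoc 0 t, ‖σs x‖ ≤ M := fun x hx ↦ by
    have hx' : x ∈ Icc 0 L := hsub (Ioc_subset_Icc_self (by rwa [uIoc_of_le ht0] at hx))
    rw [norm_of_nonneg (hσs_nonneg x hx')]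
    exact hM x hx'
  gcongr
  calc ∫ r in (0:ℝ)..t, σs r ≤ ‖∫ r in (0:ℝ)..t, σs r‖ := le_norm_self _
    _ ≤ M * |t - 0| := norm_integral_le_of_norm_le_const hbound
    _ ≤ M * L := by rw [sub_zero, abs_of_nonneg ht0]; gcongr

/-- Core L^∞ contraction estimate along a characteristic line:
for nonnegative measurable `σ, σs` with `σs ≤ σ` on `[0, L]` and `σs ≤ M`,
and `0 ≤ t ≤ L`, the integral `∫₀ᵗ exp(-∫ₛᵗ σ) σs(s) ds` is at most
`1 - exp(-∫₀ᵗ σs)`, which is at most `1 - exp(-M·L)`. -/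
theorem stmt0 (σ σs : ℝ → ℝ) (L M t : ℝ)
    (hσmeas : Measurable σ) (hσsmeas : Measurable σs)
    (hσs_nonneg : ∀ s ∈ Icc 0 L, 0 ≤ σs s)
    (hle : ∀ s ∈ Icc 0 L, σs s ≤ σ s)
    (hM : ∀ s ∈ Icc 0 L, σs s ≤ M)
    (hσint : IntegrableOn σ (Icc 0 L))
    (ht0 : 0 ≤ t) (htL : t ≤ L) :
    (∫ s in (0:ℝ)..t, Real.exp (-(∫ r in s..t, σ r)) * σs s)
        ≤ 1 - Real.exp (-(∫ r in (0:ℝ)..t, σs r)) ∧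
    1 - Real.exp (-(∫ r in (0:ℝ)..t, σs r)) ≤ 1 - Real.exp (-(M * L)) :=
  stmt0_general σ σs L M t hσsmeas hσs_nonneg hle hM hσint ht0 htL
end

section
/- Let σ, σs : [0,L] → ℝ be measurable with 0 ≤ σs ≤ σ pointwise, and let w : [0,L] → ℝ be integrable. Then ∫₀ᴸ σs(t) ∫₀ᵗ exp(-∫ₛᵗ σ(r) dr) |w(s)| ds dt ≤ (1 - exp(-‖σs‖_∞ L)) ∫₀ᴸ |w(s)| ds, where ‖σs‖_∞ is an essential upper bound of σs on [0,L]. -/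
/-!
Since `σs ≤ σ`, the attenuation `exp (-∫ₛᵗ σ)` is at most `exp (-∫ₛᵗ σs)`. After exchanging the
order of integration, the weight of `|w s|` becomes `∫ₛᴸ σs t · exp (-∫ₛᵗ σs) dt`, which equals
`1 - exp (-∫ₛᴸ σs)` by the fundamental theorem of calculus for the absolutely continuous function
`t ↦ exp (-∫ₛᵗ σs)`, and `∫ₛᴸ σs ≤ M L`. The exchange is done for lower Lebesgue integrals, where
Tonelli needs measurability only.
-/

open MeasureTheory intervalIntegral Real Set Filter Function
open scoped ENNReal

theorem LocallyLipschitz.comp_absolutelyContinuousOnInterval {E Y : Type*}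
    [SeminormedAddCommGroup E] [PseudoMetricSpace Y] {g : E → Y} {f : ℝ → E} {a b : ℝ}
    (hg : LocallyLipschitz g) (hf : AbsolutelyContinuousOnInterval f a b) :
    AbsolutelyContinuousOnInterval (g ∘ f) a b := by
  have hc : IsCompact (f '' uIcc a b) := isCompact_uIcc.image_of_continuousOn hf.continuousOn
  obtain ⟨K, hK⟩ := LocallyLipschitzOn.exists_lipschitzOnWith_of_compact hc hg.locallyLipschitzOn
  unfold AbsolutelyContinuousOnInterval at hf ⊢
  refine squeeze_zero' (Eventually.of_forall fun _ ↦ Finset.sum_nonneg fun _ _ ↦ dist_nonneg) ?_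
    (by simpa using hf.const_mul (K : ℝ))
  rw [eventually_inf_principal]
  filter_upwards with E hE
  rw [Finset.mul_sum]
  gcongr with i hi
  exact hK.dist_le_mul _ (mem_image_of_mem f (hE.1 i hi).1) _ (mem_image_of_mem f (hE.1 i hi).2)

theorem integral_mul_exp_neg_integral {ρ : ℝ → ℝ} {a b : ℝ}
    (hρ : IntervalIntegrable ρ volume a b) :
    ∫ t in a..b, ρ t * exp (-∫ u in a..t, ρ u) = 1 - exp (-∫ u in a..b, ρ u) := by
  set g : ℝ → ℝ := fun x ↦ exp (-∫ u in a..x, ρ u)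
  have hg : AbsolutelyContinuousOnInterval g a b :=
    (contDiff_exp.comp contDiff_neg).locallyLipschitz.comp_absolutelyContinuousOnInterval
      (hρ.absolutelyContinuousOnInterval_intervalIntegral left_mem_uIcc)
  have hderiv : ∀ᵐ t, t ∈ Set.uIoc a b → deriv g t = -(ρ t * g t) := by
    filter_upwards [hρ.ae_hasDerivAt_integral] with t ht htab
    have : HasDerivAt g (g t * -ρ t) t := (ht (uIoc_subset_uIcc htab) a left_mem_uIcc).neg.exp
    rw [this.deriv]; ring
  have hFTC := hg.integral_deriv_eq_sub
  rw [integral_congr_ae hderiv, intervalIntegral.integral_neg] at hFTC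
  simp only [g, integral_same, neg_zero, exp_zero] at hFTC
  linarith

theorem lintegral_ofReal_mul_exp_neg_integral {ρ : ℝ → ℝ} {a b : ℝ} (hab : a ≤ b)
    (hρ : IntervalIntegrable ρ volume a b) (hρ0 : ∀ t ∈ Ioc a b, 0 ≤ ρ t) :
    ∫⁻ t in Ioc a b, ENNReal.ofReal (ρ t * exp (-∫ u in a..t, ρ u)) =
      ENNReal.ofReal (1 - exp (-∫ u in a..b, ρ u)) := by
  have hexp : ContinuousOn (fun t ↦ exp (-∫ u in a..t, ρ u)) (uIcc a b) :=
    continuous_exp.comp_continuousOn (continuousOn_primitive_interval' hρ left_mem_uIcc).neg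
  have hint : IntegrableOn (fun t ↦ ρ t * exp (-∫ u in a..t, ρ u)) (Ioc a b) :=
    (intervalIntegrable_iff_integrableOn_Ioc_of_le hab).mp (hρ.mul_continuousOn hexp)
  rw [← integral_mul_exp_neg_integral hρ, integral_of_le hab,
    ofReal_integral_eq_lintegral_ofReal hint]
  filter_upwards [ae_restrict_mem measurableSet_Ioc] with t ht
  exact mul_nonneg (hρ0 t ht) (exp_pos _).le

theorem enorm_intervalIntegral_le_lintegral {E : Type*} [NormedAddCommGroup E] [NormedSpace ℝ E]
    {f : ℝ → E} {g : ℝ → ℝ≥0∞} {a b : ℝ} (hab : a ≤ b)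
    (hfg : ∀ x ∈ Ioc a b, ‖f x‖ₑ ≤ g x) :
    ‖∫ x in a..b, f x‖ₑ ≤ ∫⁻ x in Ioc a b, g x := by
  rw [integral_of_le hab]
  exact (enorm_integral_le_lintegral_enorm _).trans (setLIntegral_mono' measurableSet_Ioc hfg)

theorem enorm_mul_integral_exp_neg_integral_le {ρ σ w : ℝ → ℝ} {a t c : ℝ} (hat : a ≤ t)
    (hρ : IntervalIntegrable ρ volume a t) (hσ : IntervalIntegrable σ volume a t)
    (hρσ : ∀ x ∈ Icc a t, ρ x ≤ σ x) (hc : 0 ≤ c) :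
    ‖c * ∫ s in a..t, exp (-∫ r in s..t, σ r) * |w s|‖ₑ ≤
      ∫⁻ s in Ioc a t, ENNReal.ofReal (c * exp (-∫ r in s..t, ρ r)) * ‖w s‖ₑ := by
  have hinner : ‖∫ s in a..t, exp (-∫ r in s..t, σ r) * |w s|‖ₑ ≤
      ∫⁻ s in Ioc a t, ENNReal.ofReal (exp (-∫ r in s..t, ρ r)) * ‖w s‖ₑ := by
    refine enorm_intervalIntegral_le_lintegral hat fun s hs ↦ ?_
    have hsub : uIcc s t ⊆ uIcc a t := by
      rw [uIcc_of_le hs.2, uIcc_of_le hat]; exact Icc_subset_Icc_left hs.1.le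
    have hle : ∫ r in s..t, ρ r ≤ ∫ r in s..t, σ r :=
      integral_mono_on hs.2 (hρ.mono_set hsub) (hσ.mono_set hsub)
        fun x hx ↦ hρσ x ⟨hs.1.le.trans hx.1, hx.2⟩
    rw [enorm_mul, enorm_abs, enorm_of_nonneg (exp_pos _).le]
    gcongr
  rw [enorm_mul, enorm_of_nonneg hc]
  grw [hinner, ← lintegral_const_mul' _ _ ENNReal.ofReal_ne_top]
  simp only [ENNReal.ofReal_mul hc, mul_assoc, le_refl]

theorem lintegral_Ioc_lintegral_Ioc_exp_kernel_le {ρ : ℝ → ℝ} {f : ℝ → ℝ≥0∞} {a b : ℝ}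
    (hρ : LocallyIntegrable ρ volume) (hρ0 : ∀ t ∈ Ioc a b, 0 ≤ ρ t)
    (hf : AEMeasurable f (volume.restrict (Ioc a b))) :
    ∫⁻ t in Ioc a b, ∫⁻ s in Ioc a t, ENNReal.ofReal (ρ t * exp (-∫ u in s..t, ρ u)) * f s ≤
      ENNReal.ofReal (1 - exp (-∫ u in a..b, ρ u)) * ∫⁻ s in Ioc a b, f s := by
  have hρ' (x y : ℝ) : IntervalIntegrable ρ volume x y :=
    (hρ.integrableOn_isCompact isCompact_uIcc).intervalIntegrable
  have hρm : AEMeasurable ρ (volume.restrict (Ioc a b)) :=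
    hρ.aestronglyMeasurable.aemeasurable.restrict
  set k : ℝ → ℝ → ℝ≥0∞ := fun t s ↦ ENNReal.ofReal (ρ t * exp (-∫ u in s..t, ρ u))
  set K : ℝ → ℝ → ℝ≥0∞ := fun t s ↦ (Iic t).indicator (fun s ↦ k t s * f s) s
  have hinner (t : ℝ) (ht : t ∈ Ioc a b) :
      ∫⁻ s in Ioc a t, k t s * f s = ∫⁻ s in Ioc a b, K t s := by
    rw [lintegral_indicator measurableSet_Iic, Measure.restrict_restrict measurableSet_Iic,
      Iic_inter_Ioc_of_le ht.2]
  have hexponent : Continuous (uncurry fun t s ↦ ∫ u in s..t, ρ u) := by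
    have hP := continuous_primitive hρ' a
    have hdiff : (uncurry fun t s ↦ ∫ u in s..t, ρ u) =
        fun p ↦ (∫ u in a..p.1, ρ u) - ∫ u in a..p.2, ρ u := by
      ext p
      exact (integral_interval_sub_left (hρ' _ _) (hρ' _ _)).symm
    rw [hdiff]
    fun_prop
  have hK : AEMeasurable (uncurry K)
      ((volume.restrict (Ioc a b)).prod (volume.restrict (Ioc a b))) := by
    refine AEMeasurable.indicator ?_ (measurableSet_le measurable_snd measurable_fst)
    exact ((hρm.comp_fst.mul (continuous_exp.comp hexponent.neg).aemeasurable).ennreal_ofReal).mul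
      hf.comp_snd
  have houter (s : ℝ) (hs : s ∈ Ioc a b) :
      ∫⁻ t in Ioc a b, K t s ≤ ENNReal.ofReal (1 - exp (-∫ u in a..b, ρ u)) * f s := by
    have hKs : (fun t ↦ K t s) = fun t ↦ (Ici s).indicator (fun t ↦ k t s) t * f s := by
      ext t
      by_cases hst : s ≤ t <;> simp [K, hst]
    have hIcc : Ici s ∩ Ioc a b = Icc s b := by
      ext t
      simp only [mem_inter_iff, mem_Ici, mem_Ioc, mem_Icc]
      exact ⟨fun h ↦ ⟨h.1, h.2.2⟩, fun h ↦ ⟨h.1, hs.1.trans_le h.1, h.2⟩⟩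
    have hks : AEMeasurable (fun t ↦ k t s) (volume.restrict (Ioc a b)) :=
      (hρm.mul (continuous_exp.comp (continuous_primitive hρ' s).neg).aemeasurable).ennreal_ofReal
    rw [hKs, lintegral_mul_const'' _ (hks.indicator measurableSet_Ici),
      lintegral_indicator measurableSet_Ici, Measure.restrict_restrict measurableSet_Ici, hIcc,
      setLIntegral_congr Ioc_ae_eq_Icc.symm,
      lintegral_ofReal_mul_exp_neg_integral hs.2 (hρ' s b) fun t ht ↦ hρ0 t ⟨hs.1.trans ht.1, ht.2⟩]
    gcongr
    refine integral_mono_interval hs.1.le hs.2 le_rfl ?_ (hρ' a b)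
    filter_upwards [ae_restrict_mem measurableSet_Ioc] with t ht using hρ0 t ht
  calc ∫⁻ t in Ioc a b, ∫⁻ s in Ioc a t, k t s * f s
      = ∫⁻ t in Ioc a b, ∫⁻ s in Ioc a b, K t s := setLIntegral_congr_fun measurableSet_Ioc hinner
    _ = ∫⁻ s in Ioc a b, ∫⁻ t in Ioc a b, K t s := lintegral_lintegral_swap hK
    _ ≤ ∫⁻ s in Ioc a b, ENNReal.ofReal (1 - exp (-∫ u in a..b, ρ u)) * f s :=
      setLIntegral_mono' measurableSet_Ioc houter
    _ = _ := lintegral_const_mul' _ _ ENNReal.ofReal_ne_top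

theorem integral_mul_integral_exp_neg_integral_le {ρ σ w : ℝ → ℝ} {a b : ℝ} (hab : a ≤ b)
    (hρ : LocallyIntegrable ρ volume) (hρ0 : ∀ t ∈ Ioc a b, 0 ≤ ρ t)
    (hρσ : ∀ t ∈ Icc a b, ρ t ≤ σ t) (hσ : IntegrableOn σ (Icc a b))
    (hw : IntegrableOn w (Ioc a b)) :
    ∫ t in a..b, ρ t * ∫ s in a..t, exp (-∫ r in s..t, σ r) * |w s| ≤
      (1 - exp (-∫ u in a..b, ρ u)) * ∫ s in a..b, |w s| := by
  have hρ' (x y : ℝ) : IntervalIntegrable ρ volume x y :=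
    (hρ.integrableOn_isCompact isCompact_uIcc).intervalIntegrable
  have hpointwise (t : ℝ) (ht : t ∈ Ioc a b) :
      ‖ρ t * ∫ s in a..t, exp (-∫ r in s..t, σ r) * |w s|‖ₑ ≤
        ∫⁻ s in Ioc a t, ENNReal.ofReal (ρ t * exp (-∫ r in s..t, ρ r)) * ‖w s‖ₑ :=
    enorm_mul_integral_exp_neg_integral_le ht.1.le (hρ' a t)
      ((intervalIntegrable_iff_integrableOn_Icc_of_le ht.1.le).mpr
        (hσ.mono_set (Icc_subset_Icc_right ht.2)))
      (fun x hx ↦ hρσ x ⟨hx.1, hx.2.trans ht.2⟩) (hρ0 t ht)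
  have hfactor : 0 ≤ 1 - exp (-∫ u in a..b, ρ u) := by
    rw [sub_nonneg, exp_le_one_iff, neg_nonpos, integral_of_le hab]
    exact setIntegral_nonneg measurableSet_Ioc hρ0
  have hw' : ∫⁻ s in Ioc a b, ‖w s‖ₑ = ENNReal.ofReal (∫ s in a..b, |w s|) := by
    rw [integral_of_le hab, ← ofReal_integral_norm_eq_lintegral_enorm hw]
    simp only [Real.norm_eq_abs]
  rw [← ENNReal.ofReal_le_ofReal_iff
      (mul_nonneg hfactor (integral_nonneg hab fun _ _ ↦ abs_nonneg _)),
    ENNReal.ofReal_mul hfactor, ← hw']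
  calc _ ≤ ‖∫ t in a..b, ρ t * ∫ s in a..t, exp (-∫ r in s..t, σ r) * |w s|‖ₑ :=
        ofReal_le_enorm _
    _ ≤ ∫⁻ t in Ioc a b, ∫⁻ s in Ioc a t,
          ENNReal.ofReal (ρ t * exp (-∫ r in s..t, ρ r)) * ‖w s‖ₑ :=
        enorm_intervalIntegral_le_lintegral hab hpointwise
    _ ≤ _ := lintegral_Ioc_lintegral_Ioc_exp_kernel_le hρ hρ0 hw.aemeasurable.enorm

theorem stmt4_general (σ σs w : ℝ → ℝ) (L M : ℝ) (hL : 0 ≤ L)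
    (hσsmeas : Measurable σs)
    (hσs_nonneg : ∀ s ∈ Icc 0 L, 0 ≤ σs s)
    (hle : ∀ s ∈ Icc 0 L, σs s ≤ σ s)
    (hM : ∀ᵐ s ∂(volume.restrict (Icc 0 L)), σs s ≤ M)
    (hσint : IntegrableOn σ (Icc 0 L))
    (hwint : IntegrableOn w (Icc 0 L)) :
    (∫ t in (0:ℝ)..L, σs t * ∫ s in (0:ℝ)..t, Real.exp (-(∫ r in s..t, σ r)) * |w s|)
      ≤ (1 - Real.exp (-(M * L))) * ∫ s in (0:ℝ)..L, |w s| := by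
  have hσs_int : IntegrableOn σs (Icc 0 L) := by
    refine Measure.integrableOn_of_bounded (M := M) (by simp [Real.volume_Icc])
      hσsmeas.aestronglyMeasurable ?_
    filter_upwards [hM, ae_restrict_mem measurableSet_Icc] with x hxM hx
    rwa [Real.norm_eq_abs, abs_of_nonneg (hσs_nonneg x hx)]
  set τ := (Icc 0 L).indicator σs with hτ_def
  have hτ : Integrable τ := hσs_int.integrable_indicator measurableSet_Icc
  have hτ_le : ∫ u in (0:ℝ)..L, τ u ≤ M * L := by
    have hτM : τ ≤ᵐ[volume.restrict (Icc 0 L)] fun _ ↦ M := by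
      filter_upwards [hM, ae_restrict_mem measurableSet_Icc] with x hxM hx
      rwa [hτ_def, indicator_of_mem hx]
    simpa [mul_comm] using
      integral_mono_ae_restrict hL hτ.intervalIntegrable intervalIntegrable_const hτM
  have hσs_eq : EqOn σs τ (uIcc 0 L) := fun t ht ↦
    (indicator_of_mem (uIcc_of_le hL ▸ ht) σs).symm
  rw [integral_congr fun t ht ↦ by rw [hσs_eq ht]]
  refine (integral_mul_integral_exp_neg_integral_le hL hτ.locallyIntegrable
    (fun t _ ↦ indicator_nonneg hσs_nonneg t) (fun t ht ↦ ?_) hσint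
    (hwint.mono_set Ioc_subset_Icc_self)).trans ?_
  · rw [hτ_def, indicator_of_mem ht]
    exact hle t ht
  gcongr
  exact integral_nonneg hL fun _ _ ↦ abs_nonneg _

/-- One-dimensional L¹ contraction estimate for `𝓚𝓛`:
`∫₀ᴸ σs(t) ∫₀ᵗ exp(-∫ₛᵗ σ) |w(s)| ds dt ≤ (1 - e^{-M L}) ∫₀ᴸ |w|`. -/
theorem stmt4 (σ σs w : ℝ → ℝ) (L M : ℝ) (hL : 0 ≤ L)
    (hσmeas : Measurable σ) (hσsmeas : Measurable σs)
    (hσs_nonneg : ∀ s ∈ Icc 0 L, 0 ≤ σs s)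
    (hle : ∀ s ∈ Icc 0 L, σs s ≤ σ s)
    (hM : ∀ᵐ s ∂(volume.restrict (Icc 0 L)), σs s ≤ M)
    (hσint : IntegrableOn σ (Icc 0 L))
    (hwint : IntegrableOn w (Icc 0 L)) :
    (∫ t in (0:ℝ)..L, σs t * ∫ s in (0:ℝ)..t, Real.exp (-(∫ r in s..t, σ r)) * |w s|)
      ≤ (1 - Real.exp (-(M * L))) * ∫ s in (0:ℝ)..L, |w s| :=
  stmt4_general σ σs w L M hL hσsmeas hσs_nonneg hle hM hσint hwint
end

section
/- Let σ, σs : [0,L] → ℝ be measurable with 0 ≤ σs ≤ σ pointwise and σs essentially bounded by M. Then for any g ∈ ℝ, ∫₀ᴸ σs(t) exp(-∫₀ᵗ σ(s) ds) |g| dt ≤ (1 - e^{-M L}) |g|. -/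
open MeasureTheory intervalIntegral Real Set

/-!
Write `F t = ∫₀ᵗ σs`. Since `σs ≤ σ`, the integrand is at most `σs t e^{-F t}`, and by the
Lebesgue differentiation theorem this is a.e. the derivative of the monotone function `-e^{-F}`.
The integral of the derivative of a monotone function is at most its increment, so the integral is
at most `1 - e^{-F L}`, and `F L ≤ M L`.
-/

theorem integral_mul_exp_neg_integral_le {f : ℝ → ℝ} {a b : ℝ} (hab : a ≤ b)
    (hf : IntervalIntegrable f volume a b) (hf_nonneg : ∀ x ∈ Icc a b, 0 ≤ f x) :
    ∫ x in a..b, f x * exp (-∫ t in a..x, f t) ≤ 1 - exp (-∫ t in a..b, f t) := by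
  set G : ℝ → ℝ := fun x ↦ -exp (-∫ t in a..x, f t) with hG
  have hG_mono : MonotoneOn G (uIcc a b) := by
    rw [uIcc_of_le hab]
    intro x hx y hy hxy
    have hfi : IntervalIntegrable f volume a y := hf.mono_set (by
      rw [uIcc_of_le hab, uIcc_of_le hy.1]; exact Icc_subset_Icc le_rfl hy.2)
    have hFxy : ∫ t in a..x, f t ≤ ∫ t in a..y, f t :=
      integral_mono_interval le_rfl hx.1 hxy
        ((ae_restrict_iff' measurableSet_Ioc).2 (Filter.Eventually.of_forall
          fun t ht ↦ hf_nonneg t ⟨ht.1.le, ht.2.trans hy.2⟩)) hfi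
    simpa [hG] using hFxy
  have hG_deriv : ∀ᵐ x, x ∈ uIoc a b → deriv G x = f x * exp (-∫ t in a..x, f t) := by
    filter_upwards [hf.ae_hasDerivAt_integral] with x hF hx
    have hGx : HasDerivAt G (-(exp (-∫ t in a..x, f t) * -f x)) x :=
      ((hF (uIoc_subset_uIcc hx) a left_mem_uIcc).fun_neg.exp).fun_neg
    rw [hGx.deriv]
    ring
  have hGab : 0 ≤ G b - G a := sub_nonneg.2 (hG_mono left_mem_uIcc right_mem_uIcc hab)
  calc ∫ x in a..b, f x * exp (-∫ t in a..x, f t)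
      = ∫ x in a..b, deriv G x := (integral_congr_ae hG_deriv).symm
    _ ≤ G b - G a := by
      have := hG_mono.intervalIntegral_deriv_mem_uIcc
      rw [uIcc_of_le hGab] at this
      exact this.2
    _ = 1 - exp (-∫ t in a..b, f t) := by
      simp only [hG, integral_same, neg_zero, exp_zero, sub_neg_eq_add]
      ring

theorem IntervalIntegrable.mul_exp_neg_integral {f w : ℝ → ℝ} {a b : ℝ}
    (hf : IntervalIntegrable f volume a b) (hw : IntervalIntegrable w volume a b) :
    IntervalIntegrable (fun x ↦ f x * exp (-∫ t in a..x, w t)) volume a b :=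
  hf.mul_continuousOn
    (continuous_exp.comp_continuousOn (continuousOn_primitive_interval' hw left_mem_uIcc).neg)

theorem integral_le_mul_of_ae_le {f : ℝ → ℝ} {a b M : ℝ} (hab : a ≤ b)
    (hf : IntervalIntegrable f volume a b) (hM : ∀ᵐ x ∂volume.restrict (Icc a b), f x ≤ M) :
    ∫ x in a..b, f x ≤ M * (b - a) := by
  simpa [mul_comm] using integral_mono_ae_restrict hab hf intervalIntegrable_const hM

theorem stmt5_general (σ σs : ℝ → ℝ) (L M g : ℝ) (hL : 0 ≤ L)
    (hσsmeas : Measurable σs)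
    (hσs_nonneg : ∀ s ∈ Icc 0 L, 0 ≤ σs s)
    (hle : ∀ s ∈ Icc 0 L, σs s ≤ σ s)
    (hM : ∀ᵐ s ∂(volume.restrict (Icc 0 L)), σs s ≤ M)
    (hσint : IntegrableOn σ (Icc 0 L)) :
    (∫ t in (0:ℝ)..L, σs t * Real.exp (-(∫ s in (0:ℝ)..t, σ s)) * |g|)
      ≤ (1 - Real.exp (-(M * L))) * |g| := by
  have hσ : IntervalIntegrable σ volume 0 L :=
    (intervalIntegrable_iff_integrableOn_Icc_of_le hL).2 hσint
  have hσs : IntervalIntegrable σs volume 0 L :=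
    (intervalIntegrable_iff_integrableOn_Icc_of_le hL).2 <|
      Integrable.mono' hσint hσsmeas.aestronglyMeasurable <|
        (ae_restrict_iff' measurableSet_Icc).2 <| .of_forall fun s hs ↦ by
          rw [Real.norm_of_nonneg (hσs_nonneg s hs)]; exact hle s hs
  have hcompare : ∀ t ∈ Icc 0 L,
      σs t * exp (-∫ s in 0..t, σ s) ≤ σs t * exp (-∫ s in 0..t, σs s) := by
    intro t ht
    have hsub : uIcc 0 t ⊆ uIcc 0 L := by
      rw [uIcc_of_le ht.1, uIcc_of_le hL]; exact Icc_subset_Icc le_rfl ht.2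
    gcongr
    · exact hσs_nonneg t ht
    exact integral_mono_on ht.1 (hσs.mono_set hsub) (hσ.mono_set hsub)
      fun s hs ↦ hle s ⟨hs.1, hs.2.trans ht.2⟩
  rw [intervalIntegral.integral_mul_const]
  gcongr
  calc ∫ t in 0..L, σs t * exp (-∫ s in 0..t, σ s)
      ≤ ∫ t in 0..L, σs t * exp (-∫ s in 0..t, σs s) :=
        integral_mono_on hL (hσs.mul_exp_neg_integral hσ) (hσs.mul_exp_neg_integral hσs) hcompare
    _ ≤ 1 - exp (-∫ s in 0..L, σs s) := integral_mul_exp_neg_integral_le hL hσs hσs_nonneg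
    _ ≤ 1 - exp (-(M * L)) := by
      gcongr
      simpa using integral_le_mul_of_ae_le hL hσs hM

/-- One-dimensional estimate `‖σs 𝓙g‖_{L¹} ≤ (1-e^{-ML})|g|` for the extension of
inflow boundary data. -/
theorem stmt5 (σ σs : ℝ → ℝ) (L M g : ℝ) (hL : 0 ≤ L)
    (hσmeas : Measurable σ) (hσsmeas : Measurable σs)
    (hσs_nonneg : ∀ s ∈ Icc 0 L, 0 ≤ σs s)
    (hle : ∀ s ∈ Icc 0 L, σs s ≤ σ s)
    (hM : ∀ᵐ s ∂(volume.restrict (Icc 0 L)), σs s ≤ M)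
    (hσint : IntegrableOn σ (Icc 0 L)) :
    (∫ t in (0:ℝ)..L, σs t * Real.exp (-(∫ s in (0:ℝ)..t, σ s)) * |g|)
      ≤ (1 - Real.exp (-(M * L))) * |g| :=
  stmt5_general σ σs L M g hL hσsmeas hσs_nonneg hle hM hσint
end

section
/- Let σ⁺ : [0,1] → ℝ be nonnegative and integrable. For the two-point transport system φ⁺'(t)/ℓ + σ⁺(t)(φ⁺(t) - φ⁻(t)) = f⁺(t), -φ⁻'(t)/ℓ + σ⁻(t)(φ⁻(t) - φ⁺(t)) = f⁻(t) on (0,1) with φ⁺(0) = φ⁻(1) = 0, σ⁻(t) = σ⁺(1-t), f⁺(t) = σ⁺(t)exp(-∫₀^{1-t} σ⁺(s) ds), f⁻(t) = f⁺(1-t), and ℓ = 1, the pair φ⁺(t) = 1 - exp(-∫₀ᵗ σ⁺(s) ds), φ⁻(t) = φ⁺(1-t) is a solution. -/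
open MeasureTheory intervalIntegral Real Set Filter Topology

/-- Lebesgue differentiation: a.e. derivative of the indefinite integral of an
integrable function. -/
lemma aux_ae_hasDerivAt_integral {g : ℝ → ℝ} (hg : Integrable g) :
    ∀ᵐ x ∂(volume : Measure ℝ),
      HasDerivAt (fun t => ∫ s in (0:ℝ)..t, g s) (g x) x := by
  filter_upwards [(IsUnifLocDoublingMeasure.vitaliFamily (volume : Measure ℝ) 1).ae_tendsto_average
    hg.locallyIntegrable] with x hx
  set G : ℝ → ℝ := fun t => ∫ s in (0:ℝ)..t, g s with hG
  have hsub : ∀ a b : ℝ, G b - G a = ∫ s in a..b, g s := by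
    intro a b
    exact integral_interval_sub_left hg.intervalIntegrable hg.intervalIntegrable
  rw [hasDerivAt_iff_tendsto_slope]
  rw [← nhdsLT_sup_nhdsGT, tendsto_sup]
  constructor
  · -- left limit
    apply Tendsto.congr' _ (hx.comp (Real.tendsto_Icc_vitaliFamily_left x))
    filter_upwards [self_mem_nhdsWithin] with y (hy : y < x)
    have hvol : (volume (Icc y x)).toReal = x - y := by
      rw [Real.volume_Icc, ENNReal.toReal_ofReal (by linarith)]
    have hI : ∫ s in Icc y x, g s = G x - G y := by
      rw [hsub y x, integral_of_le hy.le, ← integral_Icc_eq_integral_Ioc]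
    simp only [Function.comp_apply, setAverage_eq, measureReal_def, hvol, hI, slope_def_field, smul_eq_mul]
    have hne : y - x ≠ 0 := sub_ne_zero.mpr hy.ne
    have hne2 : x - y ≠ 0 := sub_ne_zero.mpr hy.ne'
    rw [inv_mul_eq_div, div_eq_div_iff hne2 hne]
    ring
  · -- right limit
    apply Tendsto.congr' _ (hx.comp (Real.tendsto_Icc_vitaliFamily_right x))
    filter_upwards [self_mem_nhdsWithin] with y (hy : x < y)
    have hvol : (volume (Icc x y)).toReal = y - x := by
      rw [Real.volume_Icc, ENNReal.toReal_ofReal (by linarith)]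
    have hI : ∫ s in Icc x y, g s = G y - G x := by
      rw [hsub x y, integral_of_le hy.le, ← integral_Icc_eq_integral_Ioc]
    simp only [Function.comp_apply, setAverage_eq, measureReal_def, hvol, hI, slope_def_field, smul_eq_mul]
    rw [div_eq_inv_mul]

/-- Verification of the explicit solution of the coupled two-direction transport
system in the sharpness example (with `ℓ = 1`):
`φ⁺(t) = 1 - exp(-∫₀ᵗ σ⁺)`, `φ⁻(t) = φ⁺(1-t)` solves
`φ⁺' + σ⁺(φ⁺-φ⁻) = f⁺`, `-φ⁻' + σ⁻(φ⁻-φ⁺) = f⁻` with `φ⁺(0) = φ⁻(1) = 0`. -/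
theorem stmt15 (σp : ℝ → ℝ)
    (hσp_nonneg : ∀ s ∈ Icc (0:ℝ) 1, 0 ≤ σp s)
    (hσpint : IntegrableOn σp (Icc (0:ℝ) 1))
    (σm fp fm φp φm : ℝ → ℝ)
    (hσm : ∀ t, σm t = σp (1 - t))
    (hfp : ∀ t, fp t = σp t * Real.exp (-(∫ s in (0:ℝ)..(1 - t), σp s)))
    (hfm : ∀ t, fm t = fp (1 - t))
    (hφp : ∀ t, φp t = 1 - Real.exp (-(∫ s in (0:ℝ)..t, σp s)))
    (hφm : ∀ t, φm t = φp (1 - t)) :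
    φp 0 = 0 ∧ φm 1 = 0 ∧
    (∀ᵐ t ∂(volume.restrict (Ioo (0:ℝ) 1)),
      (∃ d : ℝ, HasDerivAt φp d t ∧ d + σp t * (φp t - φm t) = fp t) ∧
      (∃ d' : ℝ, HasDerivAt φm d' t ∧ -d' + σm t * (φm t - φp t) = fm t)) := by
  set g : ℝ → ℝ := (Icc (0:ℝ) 1).indicator σp with hgdef
  have hgint : Integrable g := by
    rw [hgdef, integrable_indicator_iff measurableSet_Icc]
    exact hσpint
  set G : ℝ → ℝ := fun t => ∫ s in (0:ℝ)..t, g s with hGdef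
  -- integrals of σp and g agree on [0,1]
  have hGeq : ∀ u ∈ Icc (0:ℝ) 1, (∫ s in (0:ℝ)..u, σp s) = G u := by
    intro u hu
    apply intervalIntegral.integral_congr
    intro s hs
    rw [Set.uIcc_of_le hu.1] at hs
    rw [hgdef, Set.indicator_of_mem (Set.mem_Icc.mpr ⟨hs.1, le_trans hs.2 hu.2⟩)]
  have hφpG : ∀ u ∈ Icc (0:ℝ) 1, φp u = 1 - Real.exp (-(G u)) := by
    intro u hu; rw [hφp u, hGeq u hu]
  refine ⟨?_, ?_, ?_⟩
  · simp [hφp 0]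
  · rw [hφm 1]; simp [hφp 0]
  · have h1 : ∀ᵐ x ∂(volume : Measure ℝ), HasDerivAt G (g x) x :=
      aux_ae_hasDerivAt_integral hgint
    have h2 : ∀ᵐ t ∂(volume : Measure ℝ), HasDerivAt G (g (1 - t)) (1 - t) :=
      (Measure.measurePreserving_sub_left (volume : Measure ℝ) 1).quasiMeasurePreserving.ae h1
    filter_upwards [ae_restrict_of_ae h1, ae_restrict_of_ae h2,
      ae_restrict_mem measurableSet_Ioo] with t hd1 hd2 ht
    have ht01 : t ∈ Icc (0:ℝ) 1 := ⟨ht.1.le, ht.2.le⟩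
    have ht01' : (1 - t) ∈ Icc (0:ℝ) 1 := ⟨by linarith [ht.2], by linarith [ht.1]⟩
    have hmem : Ioo (0:ℝ) 1 ∈ 𝓝 t := isOpen_Ioo.mem_nhds ht
    -- g agrees with σp on [0,1]
    have hgt : g t = σp t := indicator_of_mem ht01 σp
    have hgt' : g (1 - t) = σp (1 - t) := indicator_of_mem ht01' σp
    -- derivative of φp
    have hEp : φp =ᶠ[𝓝 t] fun u => 1 - Real.exp (-(G u)) := by
      filter_upwards [hmem] with u hu
      exact hφpG u ⟨hu.1.le, hu.2.le⟩
    have hdp : HasDerivAt (fun u => 1 - Real.exp (-(G u)))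
        (Real.exp (-(G t)) * g t) t := by
      have := ((hd1.neg).exp).const_sub 1
      simp only [Pi.neg_apply, mul_neg, neg_neg] at this
      exact this
    have hφpd : HasDerivAt φp (Real.exp (-(G t)) * g t) t :=
      hdp.congr_of_eventuallyEq hEp
    -- derivative of φm
    have hEm : φm =ᶠ[𝓝 t] fun u => 1 - Real.exp (-(G (1 - u))) := by
      filter_upwards [hmem] with u hu
      rw [hφm u]
      exact hφpG (1 - u) ⟨by linarith [hu.2], by linarith [hu.1]⟩
    have hinner : HasDerivAt (fun u : ℝ => G (1 - u)) (-(g (1 - t))) t := by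
      have h0 : HasDerivAt (fun u : ℝ => 1 - u) (-1) t := by
        simpa using (hasDerivAt_id t).const_sub 1
      have := hd2.comp t h0
      rw [mul_neg, mul_one] at this
      exact this
    have hdm : HasDerivAt (fun u => 1 - Real.exp (-(G (1 - u))))
        (-(Real.exp (-(G (1 - t))) * g (1 - t))) t := by
      have := ((hinner.neg).exp).const_sub 1
      simp only [Pi.neg_apply, mul_neg, neg_neg] at this
      exact this
    have hφmd : HasDerivAt φm (-(Real.exp (-(G (1 - t))) * g (1 - t))) t :=
      hdm.congr_of_eventuallyEq hEm
    -- values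
    have hvp : φp t = 1 - Real.exp (-(G t)) := hφpG t ht01
    have hvm : φm t = 1 - Real.exp (-(G (1 - t))) := by
      rw [hφm t]; exact hφpG (1 - t) ht01'
    constructor
    · refine ⟨Real.exp (-(G t)) * g t, hφpd, ?_⟩
      rw [hgt, hvp, hvm, hfp t, hGeq (1 - t) ht01']
      ring
    · refine ⟨-(Real.exp (-(G (1 - t))) * g (1 - t)), hφmd, ?_⟩
      rw [hgt', hvp, hvm, hσm t, hfm t, hfp (1 - t)]
      have : (1 : ℝ) - (1 - t) = t := by ring
      rw [this, hGeq t ht01]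
      ring
end
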